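/- In the q-shuffle algebra V, for all k ∈ ℕ: x ⋆ G_k = W_{−k} + (1+q⁻²) Σ_{i=0}^{k−1} W_{i+1} x² G_{k−i−1}, where on the right-hand side juxtaposition denotes the free (concatenation) product in F⟨x,y⟩. -/

import Mathlib

/-!
Since `x` is a single letter, Rosso's recursion peels one letter of `G_{k+1} = y x G_k` at a
time: `x ⋆ (y x G_k) = x y x G_k + q⁻² y (x x G_k) + y x (x ⋆ G_k)`, the two exponents `-2` and
`2` cancelling in the last term. The word `y x x G_k = W_1 x² G_k` thus appears with coefficient
`1 + q⁻²` (once from `x ⋆ G_k`, once from the step itself), and induction on `k` gives the formula.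
-/

noncomputable section

/-- Words in the letters `x` (= `false`) and `y` (= `true`). -/
abbrev Wd := List Bool

/-- The underlying vector space of the free algebra `F⟨x,y⟩`,
with the words as a basis. -/
abbrev V (F : Type*) [Field F] := Wd →₀ F

/-- The pairing `⟨u,v⟩` on letters: `2` if equal, `-2` if distinct. -/
def pr (a b : Bool) : ℤ := if a = b then 2 else -2

/-- `⟨u₁,b⟩ + ⟨u₂,b⟩ + ⋯ + ⟨u_r,b⟩` for a word `u` and a letter `b`. -/
def wsum (u : Wd) (b : Bool) : ℤ := (u.map fun a => pr a b).sum

variable {F : Type*} [Field F]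

/-- Left multiplication by a letter, in the free (concatenation) algebra. -/
def lmul (a : Bool) (f : V F) : V F := Finsupp.mapDomain (fun w => a :: w) f

/-- The `q`-shuffle product of two words (as an element of `V F`), defined by
Rosso's recursion
`u ⋆ v = u₁((u₂⋯u_r) ⋆ v) + q^{⟨u₁,v₁⟩+⋯+⟨u_r,v₁⟩} v₁(u ⋆ (v₂⋯v_s))`. -/
def sh (q : F) : Wd → Wd → V F
  | [], v => Finsupp.single v 1
  | u@(_ :: _), [] => Finsupp.single u 1
  | a :: u', b :: v' =>
      lmul a (sh q u' (b :: v')) +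
        q ^ wsum (a :: u') b • lmul b (sh q (a :: u') v')
  termination_by u v => u.length + v.length
  decreasing_by all_goals (simp only [List.length_cons]; omega)

/-- The `q`-shuffle product on `V F`, extended bilinearly from words. -/
def st (q : F) (f g : V F) : V F :=
  f.sum fun u cu => g.sum fun v cv => (cu * cv) • sh q u v

/-- The concatenation (free-algebra) product on `V F`. -/
def cm (f g : V F) : V F :=
  f.sum fun u cu => g.sum fun v cv => Finsupp.single (u ++ v) (cu * cv)

/-- Powers with respect to the concatenation product. -/
def cpow (f : V F) : ℕ → V F
  | 0 => Finsupp.single [] 1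
  | n + 1 => cm f (cpow f n)

/-- The alternating word `W_{-k} = xyx⋯x` of length `2k+1`. -/
def altX : ℕ → Wd
  | 0 => [false]
  | k + 1 => false :: true :: altX k

/-- The alternating word `W_{k+1} = yxy⋯y` of length `2k+1`. -/
def altY : ℕ → Wd
  | 0 => [true]
  | k + 1 => true :: false :: altY k

/-- The alternating word `G_k = (yx)^k`. -/
def gw : ℕ → Wd
  | 0 => []
  | k + 1 => true :: false :: gw k

/-- The alternating word `G̃_k = (xy)^k`. -/
def gtw : ℕ → Wd
  | 0 => []
  | k + 1 => false :: true :: gtw k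

/-- `W_{-k}` as an element of `V F`. -/
def Wm (F : Type*) [Field F] (k : ℕ) : V F := Finsupp.single (altX k) 1

/-- `W_{k+1}` as an element of `V F`. -/
def Wp (F : Type*) [Field F] (k : ℕ) : V F := Finsupp.single (altY k) 1

/-- `G_k` as an element of `V F`. -/
def Gn (F : Type*) [Field F] (k : ℕ) : V F := Finsupp.single (gw k) 1

/-- `G̃_k` as an element of `V F`. -/
def Gt (F : Type*) [Field F] (k : ℕ) : V F := Finsupp.single (gtw k) 1

lemma lmul_single (a : Bool) (w : Wd) (c : F) :
    lmul a (Finsupp.single w c) = Finsupp.single (a :: w) c :=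
  Finsupp.mapDomain_single

lemma lmul_add (a : Bool) (f g : V F) : lmul a (f + g) = lmul a f + lmul a g :=
  Finsupp.mapDomain_add

lemma lmul_smul (a : Bool) (c : F) (f : V F) : lmul a (c • f) = c • lmul a f :=
  Finsupp.mapDomain_smul _ _

lemma lmul_sum {ι : Type*} (a : Bool) (s : Finset ι) (f : ι → V F) :
    lmul a (∑ i ∈ s, f i) = ∑ i ∈ s, lmul a (f i) :=
  Finsupp.mapDomain_finsetSum

lemma st_single_single (q : F) (u v : Wd) :
    st q (Finsupp.single u 1) (Finsupp.single v 1) = sh q u v := by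
  rw [st, Finsupp.sum_single_index, Finsupp.sum_single_index] <;> simp

lemma sh_letter_cons (q : F) (a b : Bool) (v : Wd) :
    sh q [a] (b :: v) = Finsupp.single (a :: b :: v) 1 + q ^ pr a b • lmul b (sh q [a] v) := by
  rw [sh, sh]
  simp [wsum, lmul_single]

lemma false_cons_gw (k : ℕ) : false :: gw k = altX k := by
  induction k with
  | zero => rfl
  | succ k ih => rw [gw, altX, ← ih]

lemma sh_x_gw_succ (q : F) (hq : q ≠ 0) (k : ℕ) :
    sh q [false] (gw (k + 1)) = Finsupp.single (altX (k + 1)) 1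
      + (q⁻¹) ^ 2 • Finsupp.single (altY 0 ++ [false, false] ++ gw k) 1
      + lmul true (lmul false (sh q [false] (gw k))) := by
  have hpow : q ^ pr false true * q ^ pr false false = 1 := by
    rw [← zpow_add₀ hq]
    simp [pr]
  have hneg : q ^ pr false true = (q⁻¹) ^ 2 := by
    rw [inv_pow, ← zpow_natCast, ← zpow_neg]
    rfl
  rw [gw, altX, ← false_cons_gw, sh_letter_cons, sh_letter_cons, lmul_add, lmul_smul, smul_add,
    smul_smul, hpow, one_smul, lmul_single, hneg, add_assoc]
  rfl

lemma sh_x_gw (q : F) (hq : q ≠ 0) (k : ℕ) :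
    sh q [false] (gw k) = Finsupp.single (altX k) 1 + (1 + (q⁻¹) ^ 2) •
      ∑ i ∈ Finset.range k, Finsupp.single (altY i ++ [false, false] ++ gw (k - i - 1)) (1 : F) := by
  induction k with
  | zero => simp [gw, altX, sh]
  | succ k ih =>
    have hshift : ∀ i ∈ Finset.range k,
        lmul true (lmul false (Finsupp.single (altY i ++ [false, false] ++ gw (k - i - 1)) 1))
          = Finsupp.single (altY (i + 1) ++ [false, false] ++ gw (k + 1 - (i + 1) - 1)) (1 : F) := by
      intro i _
      rw [lmul_single, lmul_single, Nat.add_sub_add_right]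
      rfl
    have hhead : lmul true (lmul false (Finsupp.single (altX k) (1 : F)))
        = Finsupp.single (altY 0 ++ [false, false] ++ gw (k + 1 - 0 - 1)) 1 := by
      rw [lmul_single, lmul_single, ← false_cons_gw]
      rfl
    rw [sh_x_gw_succ q hq, ih, lmul_add, lmul_add, lmul_smul, lmul_smul, lmul_sum, lmul_sum,
      Finset.sum_congr rfl hshift, hhead, Finset.sum_range_succ', smul_add, Nat.sub_zero,
      Nat.add_sub_cancel]
    module

theorem stmt_7_general {F : Type*} [Field F] (q : F) (hq : q ≠ 0) (k : ℕ) :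
    st q (Wm F 0) (Gn F k)
      = Wm F k + (1 + (q⁻¹) ^ 2) •
          ∑ i ∈ Finset.range k,
            Finsupp.single (altY i ++ [false, false] ++ gw (k - i - 1)) (1 : F) := by
  rw [Wm, Gn, altX, st_single_single, sh_x_gw q hq]
  rfl

/-- `x ⋆ G_k = W_{−k} + (1+q⁻²) Σ_{i=0}^{k−1} W_{i+1} x² G_{k−i−1}`,
where the summands on the right are concatenated words. -/
theorem stmt_7 {F : Type*} [Field F] (q : F) (hq : q ≠ 0)
    (hq' : ∀ n : ℕ, 0 < n → q ^ n ≠ 1) (k : ℕ) :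
    st q (Wm F 0) (Gn F k)
      = Wm F k + (1 + (q⁻¹) ^ 2) •
          ∑ i ∈ Finset.range k,
            Finsupp.single (altY i ++ [false, false] ++ gw (k - i - 1)) (1 : F) :=
  stmt_7_general q hq k
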